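/- Let S ⊆ ℝⁿ be measurable, let α : ℝⁿ × ℝⁿ → ℝⁿ be antisymmetric (α(x,y) = -α(y,x) for all x,y), let v : ℝⁿ → ℝ and f : ℝⁿ × ℝⁿ → ℝⁿ, and suppose the functions (x,y) ↦ v(x) f(x,y) · α(x,y) and (x,y) ↦ v(x) f(y,x) · α(x,y) are integrable on S × S. Then ∫_S v(x) D_S(f)(x) dx = ∫_S ∫_S (D*v)(x,y) · f(x,y) dy dx; that is, the nonlocal gradient operator D* is the adjoint of the nonlocal divergence D_S. -/
import Mathlib


open MeasureTheory RealInnerProductSpace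

/-- Euclidean space `ℝⁿ`. -/
abbrev Euc (n : ℕ) := EuclideanSpace ℝ (Fin n)

/-- The nonlocal divergence over `S`: `D_S(f)(x) := ∫_S (f(x,y) + f(y,x)) · α(x,y) dy`. -/
noncomputable def nldivS {n : ℕ} (S : Set (Euc n)) (a f : Euc n → Euc n → Euc n)
    (x : Euc n) : ℝ :=
  ∫ y in S, ⟪f x y + f y x, a x y⟫

/-- The nonlocal gradient adjoint: `(D*u)(x,y) := -(u(y) - u(x)) α(x,y)`. -/
noncomputable def nlgrad {n : ℕ} (a : Euc n → Euc n → Euc n) (u : Euc n → ℝ)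
    (x y : Euc n) : Euc n :=
  -(u y - u x) • a x y

/-- The adjoint identity: `D*` is the adjoint of the nonlocal divergence `D_S`, i.e.
`∫_S v(x) D_S(f)(x) dx = ∫_S ∫_S (D*v)(x,y) · f(x,y) dy dx`. -/
theorem nlgrad_adjoint_nldivS {n : ℕ}
    (S : Set (Euc n)) (hS : MeasurableSet S)
    (a : Euc n → Euc n → Euc n)
    (ha : ∀ x y, a x y = - a y x)
    (v : Euc n → ℝ) (f : Euc n → Euc n → Euc n)
    (h1 : IntegrableOn (fun p : Euc n × Euc n => v p.1 * ⟪f p.1 p.2, a p.1 p.2⟫) (S ×ˢ S))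
    (h2 : IntegrableOn (fun p : Euc n × Euc n => v p.1 * ⟪f p.2 p.1, a p.1 p.2⟫) (S ×ˢ S)) :
    (∫ x in S, v x * nldivS S a f x) = ∫ x in S, ∫ y in S, ⟪nlgrad a v x y, f x y⟫ := by
  set μ : Measure (Euc n) := volume.restrict S with hμ
  have hprod : (volume : Measure (Euc n × Euc n)).restrict (S ×ˢ S) = μ.prod μ := by
    rw [Measure.volume_eq_prod, Measure.prod_restrict]
  rw [IntegrableOn, hprod] at h1 h2
  -- swapped version of h2
  have h2' : Integrable (fun p : Euc n × Euc n => v p.2 * ⟪f p.1 p.2, a p.1 p.2⟫) (μ.prod μ) := by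
    have h := h2.swap.neg
    refine h.congr (Filter.Eventually.of_forall fun p => ?_)
    simp only [Pi.neg_apply, Function.comp_apply, Prod.fst_swap, Prod.snd_swap]
    rw [ha p.1 p.2, inner_neg_right]
    ring
  have key2 : (∫ p, v p.1 * ⟪f p.2 p.1, a p.1 p.2⟫ ∂(μ.prod μ))
      = - ∫ p, v p.2 * ⟪f p.1 p.2, a p.1 p.2⟫ ∂(μ.prod μ) := by
    rw [← integral_prod_swap (fun p : Euc n × Euc n => v p.1 * ⟪f p.2 p.1, a p.1 p.2⟫),
      ← integral_neg]
    congr 1; funext p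
    simp only [Prod.fst_swap, Prod.snd_swap]
    rw [ha p.2 p.1, inner_neg_right]
    ring
  have hint : Integrable
      (fun p : Euc n × Euc n => v p.1 * ⟪f p.1 p.2 + f p.2 p.1, a p.1 p.2⟫) (μ.prod μ) := by
    have h := h1.add h2
    refine h.congr (Filter.Eventually.of_forall fun p => ?_)
    simp only [Pi.add_apply]
    rw [inner_add_left]; ring
  have hL : (∫ x in S, v x * nldivS S a f x)
      = ∫ p, v p.1 * ⟪f p.1 p.2 + f p.2 p.1, a p.1 p.2⟫ ∂(μ.prod μ) := by
    rw [MeasureTheory.integral_prod _ hint]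
    congr 1; funext x
    rw [nldivS, ← integral_const_mul]
  have hRint : Integrable
      (fun p : Euc n × Euc n => ⟪nlgrad a v p.1 p.2, f p.1 p.2⟫) (μ.prod μ) := by
    have h := h1.sub h2'
    refine h.congr (Filter.Eventually.of_forall fun p => ?_)
    simp only [Pi.sub_apply]
    rw [nlgrad, real_inner_smul_left, real_inner_comm]
    ring
  have hR : (∫ x in S, ∫ y in S, ⟪nlgrad a v x y, f x y⟫)
      = ∫ p, ⟪nlgrad a v p.1 p.2, f p.1 p.2⟫ ∂(μ.prod μ) := by
    rw [MeasureTheory.integral_prod _ hRint]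
  rw [hL, hR]
  calc (∫ p, v p.1 * ⟪f p.1 p.2 + f p.2 p.1, a p.1 p.2⟫ ∂(μ.prod μ))
      = (∫ p, v p.1 * ⟪f p.1 p.2, a p.1 p.2⟫ ∂(μ.prod μ))
        + ∫ p, v p.1 * ⟪f p.2 p.1, a p.1 p.2⟫ ∂(μ.prod μ) := by
        rw [← integral_add h1 h2]
        congr 1; funext p
        rw [inner_add_left]; ring
    _ = (∫ p, v p.1 * ⟪f p.1 p.2, a p.1 p.2⟫ ∂(μ.prod μ))
        - ∫ p, v p.2 * ⟪f p.1 p.2, a p.1 p.2⟫ ∂(μ.prod μ) := by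
        rw [key2]; ring
    _ = ∫ p, ⟪nlgrad a v p.1 p.2, f p.1 p.2⟫ ∂(μ.prod μ) := by
        rw [← integral_sub h1 h2']
        congr 1; funext p
        rw [nlgrad, real_inner_smul_left, real_inner_comm]
        ring
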